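/- Let q₁,q₂,q₃ be pairwise coprime positive integers and fix l₁ ∈ {1,…,q₁-1}, l₂ ∈ {1,…,q₂-1}, l₃ ∈ {0,…,q₃-1}. Then there exists (z₁^#, z₂^#, z₃^#) ∈ ℂ³ satisfying z₁^# + z₂^# + z₃^# = 0 and ρ¹_{l₁}z₁^# + ρ²_{l₂}z₂^# + ρ³_{l₃}z₃^# = 0, such that for every (l₁',l₂',l₃') with 0 ≤ l_j' ≤ q_j - 1, (l₁',l₂',l₃') ≠ (0,0,0), and (l₁',l₂',l₃') ≠ (l₁,l₂,l₃), one has ρ¹_{l₁'}z₁^# + ρ²_{l₂'}z₂^# + ρ³_{l₃'}z₃^# ≠ 0. -/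

import Mathlib

open Complex

lemma root_pow (l q : ℕ) (hq : 0 < q) :
    (Complex.exp (2 * Real.pi * Complex.I * l / q)) ^ q = 1 := by
  rw [← Complex.exp_nat_mul]
  have hq' : (q:ℂ) ≠ 0 := Nat.cast_ne_zero.mpr hq.ne'
  have h : (q:ℂ) * (2 * Real.pi * Complex.I * l / q) = (l:ℤ) * (2 * Real.pi * Complex.I) := by
    push_cast; field_simp
  rw [h, Complex.exp_int_mul_two_pi_mul_I]

lemma root_inj (l l' q : ℕ) (hq : 0 < q) (hl : l < q) (hl' : l' < q)
    (h : Complex.exp (2 * Real.pi * Complex.I * l / q)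
       = Complex.exp (2 * Real.pi * Complex.I * l' / q)) : l = l' := by
  rw [Complex.exp_eq_exp_iff_exists_int] at h
  obtain ⟨n, hn⟩ := h
  have hq' : (q:ℂ) ≠ 0 := Nat.cast_ne_zero.mpr hq.ne'
  have hπ : (Real.pi:ℂ) ≠ 0 := by exact_mod_cast Real.pi_ne_zero
  have h2 : (2 * (Real.pi:ℂ) * Complex.I) ≠ 0 := by
    simp [hπ, Complex.I_ne_zero]
  have key : (l:ℂ) = (l':ℂ) + n * q := by
    field_simp at hn
    apply mul_left_cancel₀ h2
    linear_combination (2 * (Real.pi:ℂ) * Complex.I) * hn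
  have key' : (l:ℤ) = l' + n * q := by exact_mod_cast key
  have hd : (q:ℤ) ∣ ((l:ℤ) - l') := ⟨n, by linarith⟩
  have h0 : (l:ℤ) - l' = 0 := Int.eq_zero_of_abs_lt_dvd hd (by rw [abs_lt]; omega)
  omega

lemma root_eq_one_iff (l q : ℕ) (hq : 0 < q) (hl : l < q) :
    Complex.exp (2 * Real.pi * Complex.I * l / q) = 1 ↔ l = 0 := by
  constructor
  · intro h
    exact root_inj l 0 q hq hl hq (by rw [h]; simp)
  · intro h; subst h; simp

lemma root_mul_conj (l q : ℕ) :
    Complex.exp (2 * Real.pi * Complex.I * l / q) *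
      (starRingEnd ℂ) (Complex.exp (2 * Real.pi * Complex.I * l / q)) = 1 := by
  rw [← Complex.exp_conj, ← Complex.exp_add]
  have h : (starRingEnd ℂ) (2 * Real.pi * Complex.I * l / q) = -(2 * Real.pi * Complex.I * l / q) := by
    simp [map_div₀, Complex.conj_I, map_ofNat]
    ring
  rw [h, add_neg_cancel, Complex.exp_zero]

lemma coprime_root_eq_one {x : ℂ} {m n : ℕ} (hx : x ≠ 0) (hm : x ^ m = 1) (hn : x ^ n = 1)
    (h : Nat.Coprime m n) : x = 1 := by
  obtain ⟨u, v, huv⟩ := Nat.isCoprime_iff_coprime.mpr h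
  have h1 : x ^ ((m:ℤ) * u) * x ^ ((n:ℤ) * v) = x := by
    rw [← zpow_add₀ hx, show (m:ℤ) * u + (n:ℤ) * v = 1 by linarith, zpow_one]
  rw [zpow_mul, zpow_mul, zpow_natCast, zpow_natCast, hm, hn, one_zpow, one_zpow, one_mul] at h1
  exact h1.symm

/-- key quadratic relation for points on the unit circle of the form α+βx -/
lemma circle_quad (α β x : ℂ) (hx : x * (starRingEnd ℂ) x = 1)
    (h : (α + β*x) * ((starRingEnd ℂ) α + (starRingEnd ℂ) β * (starRingEnd ℂ) x) = 1) :
    (starRingEnd ℂ) α * β * x^2 + (α*(starRingEnd ℂ) α + β*(starRingEnd ℂ) β - 1)*x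
      + α*(starRingEnd ℂ) β = 0 := by
  linear_combination x * h - (α * (starRingEnd ℂ) β + β * (starRingEnd ℂ) β * x) * hx

theorem exists_point_on_two_planes_avoiding (q₁ q₂ q₃ : ℕ)
    (hq₁ : 0 < q₁) (hq₂ : 0 < q₂) (hq₃ : 0 < q₃)
    (h12 : Nat.Coprime q₁ q₂) (h13 : Nat.Coprime q₁ q₃) (h23 : Nat.Coprime q₂ q₃)
    (l₁ l₂ l₃ : ℕ) (hl₁ : 1 ≤ l₁) (hl₁' : l₁ < q₁) (hl₂ : 1 ≤ l₂) (hl₂' : l₂ < q₂)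
    (hl₃ : l₃ < q₃) :
    ∃ z₁ z₂ z₃ : ℂ, z₁ + z₂ + z₃ = 0 ∧
      Complex.exp (2 * Real.pi * Complex.I * l₁ / q₁) * z₁ +
        Complex.exp (2 * Real.pi * Complex.I * l₂ / q₂) * z₂ +
        Complex.exp (2 * Real.pi * Complex.I * l₃ / q₃) * z₃ = 0 ∧
      ∀ l₁' l₂' l₃' : ℕ, l₁' < q₁ → l₂' < q₂ → l₃' < q₃ →
        ¬(l₁' = 0 ∧ l₂' = 0 ∧ l₃' = 0) → ¬(l₁' = l₁ ∧ l₂' = l₂ ∧ l₃' = l₃) →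
        Complex.exp (2 * Real.pi * Complex.I * l₁' / q₁) * z₁ +
          Complex.exp (2 * Real.pi * Complex.I * l₂' / q₂) * z₂ +
          Complex.exp (2 * Real.pi * Complex.I * l₃' / q₃) * z₃ ≠ 0 := by
  set a := Complex.exp (2 * Real.pi * Complex.I * l₁ / q₁) with ha_def
  set b := Complex.exp (2 * Real.pi * Complex.I * l₂ / q₂) with hb_def
  set c := Complex.exp (2 * Real.pi * Complex.I * l₃ / q₃) with hc_def
  have ha0 : a ≠ 0 := Complex.exp_ne_zero _
  have hb0 : b ≠ 0 := Complex.exp_ne_zero _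
  have hc0 : c ≠ 0 := Complex.exp_ne_zero _
  have hane1 : a ≠ 1 := by
    intro h
    have := (root_eq_one_iff l₁ q₁ hq₁ hl₁').mp h
    omega
  have hbne1 : b ≠ 1 := by
    intro h
    have := (root_eq_one_iff l₂ q₂ hq₂ hl₂').mp h
    omega
  have haq : a ^ q₁ = 1 := root_pow l₁ q₁ hq₁
  have hbq : b ^ q₂ = 1 := root_pow l₂ q₂ hq₂
  have hcq : c ^ q₃ = 1 := root_pow l₃ q₃ hq₃
  have hab : a ≠ b := by
    intro h
    exact hane1 (coprime_root_eq_one ha0 haq (by rw [h]; exact hbq) h12)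
  have hac : a ≠ c := by
    intro h
    exact hane1 (coprime_root_eq_one ha0 haq (by rw [h]; exact hcq) h13)
  have hbc : b ≠ c := by
    intro h
    exact hbne1 (coprime_root_eq_one hb0 hbq (by rw [h]; exact hcq) h23)
  have hab' : a - b ≠ 0 := sub_ne_zero.mpr hab
  have hac' : a - c ≠ 0 := sub_ne_zero.mpr hac
  have hbc' : b - c ≠ 0 := sub_ne_zero.mpr hbc
  refine ⟨b - c, c - a, a - b, by ring, by ring, ?_⟩
  intro l₁' l₂' l₃' m1 m2 m3 hne0 hnel hcontr
  set a' := Complex.exp (2 * Real.pi * Complex.I * l₁' / q₁) with ha'_def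
  set b' := Complex.exp (2 * Real.pi * Complex.I * l₂' / q₂) with hb'_def
  set c' := Complex.exp (2 * Real.pi * Complex.I * l₃' / q₃) with hc'_def
  have ha'0 : a' ≠ 0 := Complex.exp_ne_zero _
  have ha'q : a' ^ q₁ = 1 := root_pow l₁' q₁ hq₁
  have hb'q : b' ^ q₂ = 1 := root_pow l₂' q₂ hq₂
  have hc'q : c' ^ q₃ = 1 := root_pow l₃' q₃ hq₃
  set β : ℂ := (a' - b') / (a - b) with hβ_def
  set α : ℂ := a' - β * a with hα_def
  have hA : α + β * a = a' := by rw [hα_def]; ring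
  have hB : α + β * b = b' := by
    rw [hα_def, hβ_def]; field_simp; ring
  have hC : α + β * c = c' := by
    rw [hα_def, hβ_def]
    field_simp
    linear_combination -hcontr
  -- conjugation facts
  have hca : a * (starRingEnd ℂ) a = 1 := root_mul_conj l₁ q₁
  have hcb : b * (starRingEnd ℂ) b = 1 := root_mul_conj l₂ q₂
  have hcc : c * (starRingEnd ℂ) c = 1 := root_mul_conj l₃ q₃
  have hca' : a' * (starRingEnd ℂ) a' = 1 := root_mul_conj l₁' q₁
  have hcb' : b' * (starRingEnd ℂ) b' = 1 := root_mul_conj l₂' q₂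
  have hcc' : c' * (starRingEnd ℂ) c' = 1 := root_mul_conj l₃' q₃
  have conj_split : ∀ x : ℂ, (starRingEnd ℂ) (α + β * x)
      = (starRingEnd ℂ) α + (starRingEnd ℂ) β * (starRingEnd ℂ) x := by
    intro x; simp [map_add, map_mul]
  have hPa : (α + β*a) * ((starRingEnd ℂ) α + (starRingEnd ℂ) β * (starRingEnd ℂ) a) = 1 := by
    rw [← conj_split, hA]; exact hca'
  have hPb : (α + β*b) * ((starRingEnd ℂ) α + (starRingEnd ℂ) β * (starRingEnd ℂ) b) = 1 := by
    rw [← conj_split, hB]; exact hcb'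
  have hPc : (α + β*c) * ((starRingEnd ℂ) α + (starRingEnd ℂ) β * (starRingEnd ℂ) c) = 1 := by
    rw [← conj_split, hC]; exact hcc'
  have Ea := circle_quad α β a hca hPa
  have Eb := circle_quad α β b hcb hPb
  have Ec := circle_quad α β c hcc hPc
  have h4 : (a - b) * ((starRingEnd ℂ) α * β * (a+b) + (α*(starRingEnd ℂ) α + β*(starRingEnd ℂ) β - 1)) = 0 := by
    linear_combination Ea - Eb
  have h5 : (starRingEnd ℂ) α * β * (a+b) + (α*(starRingEnd ℂ) α + β*(starRingEnd ℂ) β - 1) = 0 :=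
    (mul_eq_zero.mp h4).resolve_left hab'
  have h6' : (b - c) * ((starRingEnd ℂ) α * β * (b+c) + (α*(starRingEnd ℂ) α + β*(starRingEnd ℂ) β - 1)) = 0 := by
    linear_combination Eb - Ec
  have h6 : (starRingEnd ℂ) α * β * (b+c) + (α*(starRingEnd ℂ) α + β*(starRingEnd ℂ) β - 1) = 0 :=
    (mul_eq_zero.mp h6').resolve_left hbc'
  have h7 : (a - c) * ((starRingEnd ℂ) α * β) = 0 := by linear_combination h5 - h6
  have hu : (starRingEnd ℂ) α * β = 0 := (mul_eq_zero.mp h7).resolve_left hac'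
  have hv : α*(starRingEnd ℂ) α + β*(starRingEnd ℂ) β - 1 = 0 := by
    linear_combination h5 - (a+b) * hu
  have hw : α * (starRingEnd ℂ) β = 0 := by
    linear_combination Ea - a^2 * hu - a * hv
  rcases mul_eq_zero.mp hw with hα0 | hcβ0
  · -- α = 0 : the hyperplane coincides with (l₁,l₂,l₃)
    have hA' : β * a = a' := by rw [← hA, hα0]; ring
    have hB' : β * b = b' := by rw [← hB, hα0]; ring
    have hC' : β * c = c' := by rw [← hC, hα0]; ring
    have hβ0 : β ≠ 0 := by
      intro h
      rw [h, zero_mul] at hA'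
      exact ha'0 hA'.symm
    have hβq₁ : β ^ q₁ = 1 := by
      have : β ^ q₁ * a ^ q₁ = a' ^ q₁ := by rw [← mul_pow, hA']
      rw [haq, ha'q, mul_one] at this; exact this
    have hβq₂ : β ^ q₂ = 1 := by
      have : β ^ q₂ * b ^ q₂ = b' ^ q₂ := by rw [← mul_pow, hB']
      rw [hbq, hb'q, mul_one] at this; exact this
    have hβ1 : β = 1 := coprime_root_eq_one hβ0 hβq₁ hβq₂ h12
    rw [hβ1, one_mul] at hA' hB' hC'
    exact hnel ⟨root_inj l₁' l₁ q₁ hq₁ m1 hl₁' (by rw [← ha'_def, ← ha_def, hA']),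
      root_inj l₂' l₂ q₂ hq₂ m2 hl₂' (by rw [← hb'_def, ← hb_def, hB']),
      root_inj l₃' l₃ q₃ hq₃ m3 hl₃ (by rw [← hc'_def, ← hc_def, hC'])⟩
  · -- β = 0 : the hyperplane is the trivial one
    have hβ0 : β = 0 := by
      have := congrArg (starRingEnd ℂ) hcβ0
      simpa using this
    have hA' : α = a' := by rw [← hA, hβ0]; ring
    have hB' : α = b' := by rw [← hB, hβ0]; ring
    have hC' : α = c' := by rw [← hC, hβ0]; ring
    have ha'b' : a' = b' := hA' ▸ hB'
    have ha'c' : a' = c' := hA' ▸ hC'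
    have ha'1 : a' = 1 := coprime_root_eq_one ha'0 ha'q (by rw [ha'b']; exact hb'q) h12
    have hb'1 : b' = 1 := by rw [← ha'b', ha'1]
    have hc'1 : c' = 1 := by rw [← ha'c', ha'1]
    exact hne0 ⟨(root_eq_one_iff l₁' q₁ hq₁ m1).mp ha'1,
      (root_eq_one_iff l₂' q₂ hq₂ m2).mp hb'1,
      (root_eq_one_iff l₃' q₃ hq₃ m3).mp hc'1⟩
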